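/- For every t > 0, every time-labelled ternary tree T compatible with horizon t, every x ≥ 0 and every η > 0, one has P^t_x(T) − P^t_{x−η}(T) ≥ P^t_{x+η}(T) − P^t_x(T). -/

import Mathlib

open MeasureTheory

/-- Density of the normal distribution `N(m, v)` (`v` the variance). -/
noncomputable def gauss (m v x : ℝ) : ℝ :=
  (Real.sqrt (2 * Real.pi * v))⁻¹ * Real.exp (-(x - m) ^ 2 / (2 * v))

/-- The majority-vote probability for three independent Bernoulli votes
with success probabilities `p₁, p₂, p₃`. -/
noncomputable def g3 (p₁ p₂ p₃ : ℝ) : ℝ :=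
  p₁ * p₂ * p₃ + p₁ * p₂ * (1 - p₃) + p₂ * p₃ * (1 - p₁) + p₃ * p₁ * (1 - p₂)

/-- A time-labelled ternary tree: either a leaf, or a branch node carrying a
waiting time `τ` and three subtrees. -/
inductive TTree where
  | leaf : TTree
  | node (τ : ℝ) (T₁ T₂ T₃ : TTree) : TTree

/-- `T.compat t`: all waiting times are positive and along every root-to-leaf path
the waiting times sum to strictly less than the horizon `t` (in particular `t > 0`). -/
def TTree.compat : TTree → ℝ → Prop
  | .leaf, t => 0 < t
  | .node τ T₁ T₂ T₃, t =>
      0 < τ ∧ τ < t ∧ T₁.compat (t - τ) ∧ T₂.compat (t - τ) ∧ T₃.compat (t - τ)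

/-- The voting probability `P^t_z(T)`: recursively, a leaf contributes the probability
that a rate-2 Brownian motion started at `z` is `≥ 0` at time `t`, and a branch node
averages the majority vote of its three subtrees over the position at the branch time. -/
noncomputable def voteP : TTree → ℝ → ℝ → ℝ
  | .leaf, t, z => ∫ y in Set.Ioi (0 : ℝ), gauss z (2 * t) y
  | .node τ T₁ T₂ T₃, t, z =>
      ∫ y : ℝ, g3 (voteP T₁ (t - τ) y) (voteP T₂ (t - τ) y) (voteP T₃ (t - τ) y)
        * gauss z (2 * τ) y

/-!
Each `voteP T t` is a symmetric sigmoid: valued in `[0, 1]`, monotone, with `F z + F (-z) = 1`,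
and such that for `x ≥ 0` the sum `F (x + u) + F (x - u)` is antitone in `u ≥ 0` (at `u = 0` this
is the claimed concavity). A leaf is the Gaussian smoothing of a step function, and the class is
stable under applying `g3` pointwise and under Gaussian smoothing. After smoothing, the spread
difference at `x` is `∫_{w > 0} S w * ψ w` with `S w = G (x + w) + G (x - w)` antitone and `ψ` the
difference of two symmetric Gaussian mixtures; `ψ` has mass zero on `(0, ∞)` and changes sign there
once, from `-` to `+` (a ratio of `cosh`s is monotone), so the integral is nonpositive.
-/

open Set Real

noncomputable section

structure IsSymmSigmoid (F : ℝ → ℝ) : Prop where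
  mem_Icc : ∀ z, F z ∈ Icc (0 : ℝ) 1
  add_neg : ∀ z, F z + F (-z) = 1
  mono : Monotone F
  spread : ∀ ⦃x u u' : ℝ⦄, 0 ≤ x → 0 ≤ u → u ≤ u' →
    F (x + u') + F (x - u') ≤ F (x + u) + F (x - u)

namespace IsSymmSigmoid

variable {F : ℝ → ℝ}

theorem sub_le_add (hF : IsSymmSigmoid F) (x : ℝ) {u : ℝ} (hu : 0 ≤ u) : F (x - u) ≤ F (x + u) :=
  hF.mono (by linarith)

theorem one_le_add (hF : IsSymmSigmoid F) {x : ℝ} (hx : 0 ≤ x) (u : ℝ) :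
    1 ≤ F (x + u) + F (x - u) := by
  have h := hF.add_neg (u - x)
  rw [neg_sub] at h
  linarith [hF.mono (show u - x ≤ x + u by linarith)]

theorem abs_le_one (hF : IsSymmSigmoid F) (z : ℝ) : |F z| ≤ 1 :=
  abs_le.2 ⟨by linarith [(hF.mem_Icc z).1], (hF.mem_Icc z).2⟩

end IsSymmSigmoid

theorem g3_eq (a b c : ℝ) : g3 a b c = a * (b + c - 2 * b * c) + b * c := by
  unfold g3; ring

theorem g3_swap (a b c : ℝ) : g3 a b c = g3 b a c := by
  unfold g3; ring

theorem g3_rotate (a b c : ℝ) : g3 a b c = g3 c a b := by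
  unfold g3; ring

theorem g3_one_sub (a b c : ℝ) : g3 (1 - a) (1 - b) (1 - c) = 1 - g3 a b c := by
  unfold g3; ring

theorem g3_mono_left {a a' b c : ℝ} (ha : a ≤ a') (hb : b ∈ Icc (0 : ℝ) 1)
    (hc : c ∈ Icc (0 : ℝ) 1) : g3 a b c ≤ g3 a' b c := by
  have hweight : 0 ≤ b + c - 2 * b * c := by
    nlinarith [mul_nonneg hb.1 (sub_nonneg.2 hc.2), mul_nonneg hc.1 (sub_nonneg.2 hb.2)]
  rw [g3_eq, g3_eq]
  nlinarith [mul_le_mul_of_nonneg_right ha hweight]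

theorem g3_mono {a b c a' b' c' : ℝ} (ha : a ≤ a') (hb : b ≤ b') (hc : c ≤ c')
    (hb₀ : b ∈ Icc (0 : ℝ) 1) (hc₀ : c ∈ Icc (0 : ℝ) 1) (ha₁ : a' ∈ Icc (0 : ℝ) 1)
    (hb₁ : b' ∈ Icc (0 : ℝ) 1) : g3 a b c ≤ g3 a' b' c' :=
  calc g3 a b c ≤ g3 a' b c := g3_mono_left ha hb₀ hc₀
    _ = g3 b a' c := g3_swap _ _ _
    _ ≤ g3 b' a' c := g3_mono_left hb ha₁ hc₀
    _ = g3 c a' b' := (g3_swap _ _ _).trans (g3_rotate _ _ _)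
    _ ≤ g3 c' a' b' := g3_mono_left hc ha₁ hb₁
    _ = g3 a' b' c' := (g3_rotate _ _ _).symm

theorem g3_mem_Icc {a b c : ℝ} (ha : a ∈ Icc (0 : ℝ) 1) (hb : b ∈ Icc (0 : ℝ) 1)
    (hc : c ∈ Icc (0 : ℝ) 1) : g3 a b c ∈ Icc (0 : ℝ) 1 := by
  have h₀ : (0 : ℝ) ∈ Icc (0 : ℝ) 1 := left_mem_Icc.2 zero_le_one
  have h₁ : (1 : ℝ) ∈ Icc (0 : ℝ) 1 := right_mem_Icc.2 zero_le_one
  constructor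
  · simpa [g3] using g3_mono ha.1 hb.1 hc.1 h₀ h₀ ha hb
  · simpa [g3] using g3_mono ha.2 hb.2 hc.2 hb hc h₁ h₁

/-- `g3` is affine in its first argument, with slope `b + c - 2 * b * c` (the probability that the
first vote is pivotal); the hypotheses on the other two slots make this slope at least as large
at `(b', c')` as at `(b, c)`. -/
theorem g3_add_le_g3_add {p q r s b b' c c' : ℝ} (hrp : r ≤ p) (hsum : p + q ≤ r + s)
    (hb : b' ≤ b) (hbb' : 1 ≤ b + b') (hb₁ : b ≤ 1) (hb'₀ : 0 ≤ b')
    (hc : c' ≤ c) (hcc' : 1 ≤ c + c') (hc₁ : c ≤ 1) (hc'₀ : 0 ≤ c') :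
    g3 p b c + g3 q b' c' ≤ g3 r b c + g3 s b' c' := by
  have hpivot : 0 ≤ b + c - 2 * b * c := by
    nlinarith [mul_nonneg (hb'₀.trans hb) (sub_nonneg.2 hc₁),
      mul_nonneg (hc'₀.trans hc) (sub_nonneg.2 hb₁)]
  have hpivot' : b + c - 2 * b * c ≤ b' + c' - 2 * b' * c' := by
    nlinarith [mul_nonneg (sub_nonneg.2 hb) (by linarith : (0 : ℝ) ≤ c + c' - 1),
      mul_nonneg (by linarith : (0 : ℝ) ≤ b + b' - 1) (sub_nonneg.2 hc)]
  have key : (p - r) * (b + c - 2 * b * c) ≤ (s - q) * (b' + c' - 2 * b' * c') :=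
    mul_le_mul (by linarith) hpivot' hpivot (by linarith)
  rw [g3_eq, g3_eq, g3_eq, g3_eq]
  linarith

theorem isSymmSigmoid_g3_comp {P₁ P₂ P₃ : ℝ → ℝ} (h₁ : IsSymmSigmoid P₁) (h₂ : IsSymmSigmoid P₂)
    (h₃ : IsSymmSigmoid P₃) : IsSymmSigmoid fun z => g3 (P₁ z) (P₂ z) (P₃ z) where
  mem_Icc z := g3_mem_Icc (h₁.mem_Icc z) (h₂.mem_Icc z) (h₃.mem_Icc z)
  add_neg z := by
    simp only [eq_sub_of_add_eq' (h₁.add_neg z), eq_sub_of_add_eq' (h₂.add_neg z),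
      eq_sub_of_add_eq' (h₃.add_neg z), g3_one_sub]
    ring
  mono a b hab := g3_mono (h₁.mono hab) (h₂.mono hab) (h₃.mono hab) (h₂.mem_Icc a)
    (h₃.mem_Icc a) (h₁.mem_Icc b) (h₂.mem_Icc b)
  spread x u u' hx hu huu' := by
    have pair : ∀ {P : ℝ → ℝ}, IsSymmSigmoid P → ∀ {w : ℝ}, 0 ≤ w →
        P (x - w) ≤ P (x + w) ∧ 1 ≤ P (x + w) + P (x - w) ∧ P (x + w) ≤ 1 ∧ 0 ≤ P (x - w) :=
      fun hP w hw => ⟨hP.sub_le_add x hw, hP.one_le_add hx w, (hP.mem_Icc _).2, (hP.mem_Icc _).1⟩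
    have hu' := hu.trans huu'
    obtain ⟨b₁, bb₁, b₁₁, b₁₀⟩ := pair h₁ hu
    obtain ⟨b₂, bb₂, b₂₁, b₂₀⟩ := pair h₂ hu
    obtain ⟨c₂, cc₂, c₂₁, c₂₀⟩ := pair h₂ hu'
    obtain ⟨c₃, cc₃, c₃₁, c₃₀⟩ := pair h₃ hu'
    have mono : ∀ {P : ℝ → ℝ}, IsSymmSigmoid P → P (x + u) ≤ P (x + u') :=
      fun hP => hP.mono (by linarith)
    calc _ ≤ g3 (P₁ (x + u)) (P₂ (x + u')) (P₃ (x + u'))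
          + g3 (P₁ (x - u)) (P₂ (x - u')) (P₃ (x - u')) :=
          g3_add_le_g3_add (mono h₁) (h₁.spread hx hu huu') c₂ cc₂ c₂₁ c₂₀ c₃ cc₃ c₃₁ c₃₀
      _ ≤ g3 (P₁ (x + u)) (P₂ (x + u)) (P₃ (x + u'))
          + g3 (P₁ (x - u)) (P₂ (x - u)) (P₃ (x - u')) := by
          rw [g3_swap (P₁ _), g3_swap (P₁ _), g3_swap (P₁ _), g3_swap (P₁ _)]
          exact g3_add_le_g3_add (mono h₂) (h₂.spread hx hu huu') b₁ bb₁ b₁₁ b₁₀ c₃ cc₃ c₃₁ c₃₀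
      _ ≤ _ := by
          rw [g3_rotate _ _ (P₃ _), g3_rotate _ _ (P₃ _), g3_rotate _ _ (P₃ _),
            g3_rotate _ _ (P₃ _)]
          exact g3_add_le_g3_add (mono h₃) (h₃.spread hx hu huu') b₁ bb₁ b₁₁ b₁₀ b₂ bb₂ b₂₁ b₂₀

theorem integral_eq_setIntegral_Ioi_add_comp_neg {E : Type*} [NormedAddCommGroup E]
    [NormedSpace ℝ E] {f : ℝ → E} (hf : Integrable f) :
    ∫ x, f x = ∫ x in Ioi 0, (f x + f (-x)) := by
  rw [integral_add hf.integrableOn hf.comp_neg.integrableOn, integral_comp_neg_Ioi, neg_zero,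
    add_comm, intervalIntegral.integral_Iic_add_Ioi hf.integrableOn hf.integrableOn]

section Gaussian

variable {v : ℝ}

theorem gauss_nonneg (m y : ℝ) : 0 ≤ gauss m v y :=
  mul_nonneg (inv_nonneg.2 (sqrt_nonneg _)) (exp_pos _).le

theorem gauss_pos (m y : ℝ) (hv : 0 < v) : 0 < gauss m v y :=
  mul_pos (inv_pos.2 (sqrt_pos.2 (by positivity))) (exp_pos _)

theorem integrable_gauss (m : ℝ) (hv : 0 ≤ v) : Integrable (gauss m v) :=
  ProbabilityTheory.integrable_gaussianPDFReal m ⟨v, hv⟩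

theorem integral_gauss (m : ℝ) (hv : 0 < v) : ∫ y, gauss m v y = 1 :=
  ProbabilityTheory.integral_gaussianPDFReal_eq_one m (v := ⟨v, hv.le⟩)
    fun h => hv.ne' (congrArg NNReal.toReal h)

theorem gauss_add (m x w : ℝ) : gauss m v (x + w) = gauss (m - x) v w := by
  simp only [gauss]; ring_nf

theorem gauss_neg (m y : ℝ) : gauss m v (-y) = gauss (-m) v y := by
  simp only [gauss]; ring_nf

/-- The density of `s ε + √v Z` with `ε = ±1` a fair sign and `Z` standard normal, times two. -/
def gaussPair (v s w : ℝ) : ℝ := gauss s v w + gauss (-s) v w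

theorem integrable_gaussPair (s : ℝ) (hv : 0 ≤ v) : Integrable (gaussPair v s) :=
  (integrable_gauss s hv).add (integrable_gauss (-s) hv)

theorem setIntegral_Ioi_gaussPair (s : ℝ) (hv : 0 < v) : ∫ w in Ioi 0, gaussPair v s w = 1 := by
  rw [← integral_gauss s hv, integral_eq_setIntegral_Ioi_add_comp_neg (integrable_gauss s hv.le)]
  simp only [gaussPair, gauss_neg]

theorem gaussPair_eq (s w : ℝ) (hv : v ≠ 0) :
    gaussPair v s w = 2 * gauss 0 v w * (exp (-s ^ 2 / (2 * v)) * cosh (s / v * w)) := by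
  have hplus : -(w - s) ^ 2 / (2 * v) = -(w - 0) ^ 2 / (2 * v) + -s ^ 2 / (2 * v) + s / v * w := by
    field_simp; ring
  have hminus : -(w - -s) ^ 2 / (2 * v)
      = -(w - 0) ^ 2 / (2 * v) + -s ^ 2 / (2 * v) + -(s / v * w) := by
    field_simp; ring
  simp only [gaussPair, gauss, hplus, hminus, exp_add, cosh_eq]
  ring

theorem cosh_mul_cosh_le_cosh_mul_cosh {α β w w' : ℝ} (hβ : 0 ≤ β) (hβα : β ≤ α) (hw : 0 ≤ w)
    (hww' : w ≤ w') : cosh (β * w') * cosh (α * w) ≤ cosh (α * w') * cosh (β * w) := by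
  have hα : 0 ≤ α := hβ.trans hβα
  have hw' : 0 ≤ w' := hw.trans hww'
  have prod_eq : ∀ a b : ℝ, cosh a * cosh b = (cosh (a + b) + cosh (a - b)) / 2 := by
    intro a b; rw [cosh_add, cosh_sub]; ring
  have hsum : cosh (β * w' + α * w) ≤ cosh (α * w' + β * w) := by
    rw [cosh_le_cosh, abs_of_nonneg (by positivity), abs_of_nonneg (by positivity)]
    nlinarith [mul_nonneg (sub_nonneg.2 hβα) (sub_nonneg.2 hww')]
  have hdiff : cosh (β * w' - α * w) ≤ cosh (α * w' - β * w) := by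
    rw [cosh_le_cosh, abs_of_nonneg (a := α * w' - β * w) (by nlinarith), abs_le]
    constructor
    · nlinarith [mul_nonneg (by linarith : 0 ≤ α + β) (sub_nonneg.2 hww')]
    · nlinarith [mul_nonneg (sub_nonneg.2 hβα) (by linarith : 0 ≤ w' + w)]
  rw [prod_eq, prod_eq]
  linarith

theorem gaussPair_sub_nonneg_of_le {u u' w w' : ℝ} (hv : 0 < v) (hu : 0 ≤ u) (huu' : u ≤ u')
    (hw : 0 ≤ w) (hww' : w ≤ w') (h : 0 ≤ gaussPair v u' w - gaussPair v u w) :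
    0 ≤ gaussPair v u' w' - gaussPair v u w' := by
  simp only [gaussPair_eq _ _ hv.ne', ← mul_sub] at h ⊢
  refine mul_nonneg (by positivity [gauss_pos 0 w' hv]) (sub_nonneg.2 ?_)
  have h' := sub_nonneg.1 (nonneg_of_mul_nonneg_right h (by positivity [gauss_pos 0 w hv]))
  set a := exp (-u ^ 2 / (2 * v))
  set a' := exp (-u' ^ 2 / (2 * v))
  have key := cosh_mul_cosh_le_cosh_mul_cosh (div_nonneg hu hv.le)
    (div_le_div_of_nonneg_right huu' hv.le) hw hww'
  refine le_of_mul_le_mul_right ?_ (cosh_pos (u' / v * w))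
  calc a * cosh (u / v * w') * cosh (u' / v * w)
      = a * (cosh (u / v * w') * cosh (u' / v * w)) := by ring
    _ ≤ a * (cosh (u' / v * w') * cosh (u / v * w)) :=
      mul_le_mul_of_nonneg_left key (exp_pos _).le
    _ = cosh (u' / v * w') * (a * cosh (u / v * w)) := by ring
    _ ≤ cosh (u' / v * w') * (a' * cosh (u' / v * w)) :=
      mul_le_mul_of_nonneg_left h' (cosh_pos _).le
    _ = a' * cosh (u' / v * w') * cosh (u' / v * w) := by ring

end Gaussian

/-- Take for `c` the value of `S` where `ψ` changes sign. -/
theorem exists_mul_le_const_mul_of_antitoneOn {S ψ : ℝ → ℝ} (hS : AntitoneOn S (Ioi 0))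
    (hlo : BddBelow (S '' Ioi 0)) (hhi : BddAbove (S '' Ioi 0))
    (hψ : ∀ a w, 0 < a → a ≤ w → 0 ≤ ψ a → 0 ≤ ψ w) :
    ∃ c, ∀ w ∈ Ioi (0 : ℝ), S w * ψ w ≤ c * ψ w := by
  by_cases hneg : ∃ n ∈ Ioi (0 : ℝ), ψ n < 0
  · obtain ⟨n₀, hn₀, hψn₀⟩ := hneg
    set N := {n ∈ Ioi (0 : ℝ) | ψ n < 0}
    refine ⟨sInf (S '' N), fun w hw => ?_⟩
    rcases lt_or_ge (ψ w) 0 with hψw | hψw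
    · have : sInf (S '' N) ≤ S w :=
        csInf_le (hlo.mono (image_mono (sep_subset _ _))) ⟨w, ⟨hw, hψw⟩, rfl⟩
      nlinarith
    · have : S w ≤ sInf (S '' N) := by
        refine le_csInf ⟨_, n₀, ⟨hn₀, hψn₀⟩, rfl⟩ ?_
        rintro _ ⟨n, ⟨hn, hψn⟩, rfl⟩
        have hnw : n ≤ w := le_of_not_ge fun hwn => (hψ w n hw hwn hψw).not_gt hψn
        exact hS hn hw hnw
      exact mul_le_mul_of_nonneg_right this hψw
  · push Not at hneg
    exact ⟨sSup (S '' Ioi 0), fun w hw =>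
      mul_le_mul_of_nonneg_right (le_csSup hhi ⟨w, hw, rfl⟩) (hneg w hw)⟩

theorem setIntegral_mul_nonpos_of_antitoneOn {S ψ : ℝ → ℝ} (hS : AntitoneOn S (Ioi 0))
    (hlo : BddBelow (S '' Ioi 0)) (hhi : BddAbove (S '' Ioi 0))
    (hψ : ∀ a w, 0 < a → a ≤ w → 0 ≤ ψ a → 0 ≤ ψ w)
    (hψi : IntegrableOn ψ (Ioi 0)) (hSψi : IntegrableOn (fun w => S w * ψ w) (Ioi 0))
    (hψ₀ : ∫ w in Ioi 0, ψ w = 0) : ∫ w in Ioi 0, S w * ψ w ≤ 0 := by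
  obtain ⟨c, hc⟩ := exists_mul_le_const_mul_of_antitoneOn hS hlo hhi hψ
  calc ∫ w in Ioi 0, S w * ψ w ≤ ∫ w in Ioi 0, c * ψ w :=
        setIntegral_mono_on hSψi (hψi.const_mul c) measurableSet_Ioi hc
    _ = 0 := by rw [integral_const_mul, hψ₀, mul_zero]

def gaussSmooth (v : ℝ) (G : ℝ → ℝ) (z : ℝ) : ℝ := ∫ y, G y * gauss z v y

section Smoothing

variable {v : ℝ} {G : ℝ → ℝ}

theorem integrable_mul_gauss (hGm : Measurable G) {C : ℝ} (hGb : ∀ y, |G y| ≤ C) (m : ℝ)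
    (hv : 0 ≤ v) : Integrable fun y => G y * gauss m v y :=
  (integrable_gauss m hv).bdd_mul hGm.aestronglyMeasurable (ae_of_all _ hGb)

theorem gaussSmooth_eq_integral_add (x z : ℝ) :
    gaussSmooth v G z = ∫ w, G (x + w) * gauss (z - x) v w := by
  simp only [← gauss_add]
  exact (integral_add_left_eq_self (fun y => G y * gauss z v y) x).symm

theorem gaussSmooth_add_gaussSmooth_sub (hGm : Measurable G) {C : ℝ} (hGb : ∀ y, |G y| ≤ C)
    (hv : 0 ≤ v) (x s : ℝ) :
    gaussSmooth v G (x + s) + gaussSmooth v G (x - s)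
      = ∫ w in Ioi 0, (G (x + w) + G (x - w)) * gaussPair v s w := by
  have hint : ∀ m, Integrable fun w => G (x + w) * gauss m v w := fun m =>
    integrable_mul_gauss (hGm.comp (measurable_const_add x)) (fun w => hGb _) m hv
  rw [gaussSmooth_eq_integral_add x, gaussSmooth_eq_integral_add x, add_sub_cancel_left,
    sub_sub_cancel_left, ← integral_add (hint s) (hint (-s)),
    integral_eq_setIntegral_Ioi_add_comp_neg
      (f := fun w => G (x + w) * gauss s v w + G (x + w) * gauss (-s) v w)
      ((hint s).add (hint (-s)))]
  refine setIntegral_congr_fun measurableSet_Ioi fun w _ => ?_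
  simp only [gaussPair, gauss_neg, neg_neg, ← sub_eq_add_neg]
  ring

theorem gaussSmooth_spread_le (hG : IsSymmSigmoid G) (hv : 0 < v) {x u u' : ℝ}
    (hx : 0 ≤ x) (hu : 0 ≤ u) (huu' : u ≤ u') :
    gaussSmooth v G (x + u') + gaussSmooth v G (x - u')
      ≤ gaussSmooth v G (x + u) + gaussSmooth v G (x - u) := by
  have hGm := hG.mono.measurable
  set S := fun w => G (x + w) + G (x - w)
  set ψ := fun w => gaussPair v u' w - gaussPair v u w
  have hSm : Measurable S :=
    (hGm.comp (measurable_const_add x)).add (hGm.comp (measurable_const_sub x))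
  have hSb : ∀ w, S w ∈ Icc (0 : ℝ) 2 := fun w => by
    have h₁ := hG.mem_Icc (x + w)
    have h₂ := hG.mem_Icc (x - w)
    constructor <;> simp only [S] <;> linarith [h₁.1, h₁.2, h₂.1, h₂.2]
  have hint : ∀ s, Integrable fun w => S w * gaussPair v s w := fun s =>
    (integrable_gaussPair s hv.le).bdd_mul hSm.aestronglyMeasurable
      (ae_of_all _ fun w => abs_le.2 ⟨by linarith [(hSb w).1], (hSb w).2⟩)
  have hSψ : IntegrableOn (fun w => S w * ψ w) (Ioi 0) :=
    ((hint u').sub (hint u)).integrableOn.congr_fun (fun w _ => (mul_sub _ _ _).symm)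
      measurableSet_Ioi
  have hψ₀ : ∫ w in Ioi 0, ψ w = 0 := by
    rw [integral_sub (integrable_gaussPair u' hv.le).integrableOn
      (integrable_gaussPair u hv.le).integrableOn, setIntegral_Ioi_gaussPair u' hv,
      setIntegral_Ioi_gaussPair u hv, sub_self]
  have key := setIntegral_mul_nonpos_of_antitoneOn (S := S) (ψ := ψ)
    (fun a ha w hw haw => hG.spread hx (le_of_lt ha) haw)
    ⟨0, by rintro _ ⟨w, -, rfl⟩; exact (hSb w).1⟩ ⟨2, by rintro _ ⟨w, -, rfl⟩; exact (hSb w).2⟩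
    (fun a w ha haw => gaussPair_sub_nonneg_of_le hv hu huu' ha.le haw)
    ((integrable_gaussPair u' hv.le).sub (integrable_gaussPair u hv.le)).integrableOn hSψ hψ₀
  rw [gaussSmooth_add_gaussSmooth_sub hGm hG.abs_le_one hv.le,
    gaussSmooth_add_gaussSmooth_sub hGm hG.abs_le_one hv.le,
    ← sub_nonpos, ← integral_sub (hint u').integrableOn (hint u).integrableOn]
  simpa only [ψ, mul_sub] using key

theorem isSymmSigmoid_gaussSmooth (hG : IsSymmSigmoid G) (hv : 0 < v) :
    IsSymmSigmoid (gaussSmooth v G) where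
  mem_Icc z := by
    have hGm := hG.mono.measurable
    refine ⟨integral_nonneg fun y => mul_nonneg (hG.mem_Icc y).1 (gauss_nonneg z y), ?_⟩
    calc gaussSmooth v G z ≤ ∫ y, gauss z v y :=
          integral_mono (integrable_mul_gauss hGm hG.abs_le_one z hv.le)
            (integrable_gauss z hv.le)
            fun y => mul_le_of_le_one_left (gauss_nonneg z y) (hG.mem_Icc y).2
      _ = 1 := integral_gauss z hv
  add_neg z := by
    have h := gaussSmooth_add_gaussSmooth_sub hG.mono.measurable hG.abs_le_one hv.le 0 z
    simp only [zero_add, sub_eq_add_neg, hG.add_neg, one_mul] at h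
    rw [h, setIntegral_Ioi_gaussPair z hv]
  mono a b hab := by
    simp only [gaussSmooth_eq_integral_add a a, gaussSmooth_eq_integral_add b b, sub_self]
    have hint : ∀ x, Integrable fun w => G (x + w) * gauss 0 v w := fun x =>
      integrable_mul_gauss (hG.mono.measurable.comp (measurable_const_add x))
        (fun w => hG.abs_le_one _) 0 hv.le
    exact integral_mono (hint a) (hint b) fun w =>
      mul_le_mul_of_nonneg_right (hG.mono (by linarith)) (gauss_nonneg 0 w)
  spread _ _ _ hx hu huu' := gaussSmooth_spread_le hG hv hx hu huu'

end Smoothing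

-- The value `1/2` at `0` does not affect the leaf integral but is forced by `add_neg`.
def halfStep (y : ℝ) : ℝ := if 0 < y then 1 else if y < 0 then 0 else 1 / 2

theorem isSymmSigmoid_halfStep : IsSymmSigmoid halfStep where
  mem_Icc y := by unfold halfStep; split_ifs <;> norm_num
  add_neg y := by unfold halfStep; split_ifs <;> linarith
  mono a b hab := by unfold halfStep; split_ifs <;> linarith
  spread x u u' hx hu huu' := by unfold halfStep; split_ifs <;> linarith

theorem voteP_leaf (t : ℝ) : voteP .leaf t = gaussSmooth (2 * t) halfStep := by
  funext z
  rw [voteP, gaussSmooth, ← integral_indicator measurableSet_Ioi]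
  refine integral_congr_ae ?_
  filter_upwards [Measure.ae_ne volume 0] with y hy
  rcases hy.lt_or_gt with hneg | hpos
  · simp [halfStep, hneg, hneg.not_gt]
  · simp [halfStep, hpos]

theorem isSymmSigmoid_voteP : ∀ {T : TTree} {t : ℝ}, T.compat t → IsSymmSigmoid (voteP T t)
  | .leaf, t, ht => voteP_leaf t ▸ isSymmSigmoid_gaussSmooth isSymmSigmoid_halfStep
      (mul_pos two_pos ht)
  | .node _ _ _ _, _, ⟨hτ, _, h₁, h₂, h₃⟩ => isSymmSigmoid_gaussSmooth
      (isSymmSigmoid_g3_comp (isSymmSigmoid_voteP h₁) (isSymmSigmoid_voteP h₂)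
        (isSymmSigmoid_voteP h₃)) (mul_pos two_pos hτ)

theorem voteP_concavity_general (t : ℝ) (T : TTree) (hT : T.compat t)
    (x η : ℝ) (hx : 0 ≤ x) (hη : 0 < η) :
    voteP T t (x + η) - voteP T t x ≤ voteP T t x - voteP T t (x - η) := by
  have h := (isSymmSigmoid_voteP hT).spread hx le_rfl hη.le
  rw [add_zero, sub_zero] at h
  linarith

theorem voteP_concavity (t : ℝ) (ht : 0 < t) (T : TTree) (hT : T.compat t)
    (x η : ℝ) (hx : 0 ≤ x) (hη : 0 < η) :
    voteP T t (x + η) - voteP T t x ≤ voteP T t x - voteP T t (x - η) :=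
  voteP_concavity_general t T hT x η hx hη
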